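/- arXiv:1004.0356 — 8 statements merged into one kernel-verified Lean document; each statement's English description precedes it below -/
import Mathlib

section
/- For every odd natural number N, real c with 0 < c ≤ 1, and real x with 0 ≤ x < c/2, the ratio of the upper half binomial sum to c^N tends to 0: lim_{N→∞, N odd} (∑_{j=⌈N/2⌉}^{N} C(N,j) x^j (c-x)^{N-j}) / c^N = 0. -/
/-!
For `j ≥ k + 1` and `0 ≤ x ≤ c - x`, each term `x ^ j (c - x) ^ (2k+1-j)` is at most
`x ^ (k+1) (c - x) ^ k`, and the binomial coefficients sum to at most `2 ^ (2k+1)`. Hence the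
ratio is at most `(2x / c) · r ^ k` with `r = 4x(c - x) / c²`, and `r < 1` because
`c² - 4x(c - x) = (c - 2x)² > 0`.
-/

open Finset Filter

section
variable {R : Type*} [CommSemiring R] [PartialOrder R] [IsOrderedRing R]

theorem pow_mul_pow_sub_le_pow_mul_pow_sub {a b : R} (ha : 0 ≤ a) (hab : a ≤ b) {m j n : ℕ}
    (hmj : m ≤ j) (hjn : j ≤ n) : a ^ j * b ^ (n - j) ≤ a ^ m * b ^ (n - m) :=
  calc a ^ j * b ^ (n - j) = a ^ m * (a ^ (j - m) * b ^ (n - j)) := by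
        rw [← mul_assoc, ← pow_add, Nat.add_sub_cancel' hmj]
    _ ≤ a ^ m * (b ^ (j - m) * b ^ (n - j)) := by
        have hb : 0 ≤ b := ha.trans hab
        gcongr
    _ = a ^ m * b ^ (n - m) := by rw [← pow_add]; congr 2; omega

theorem sum_Icc_choose_mul_pow_mul_pow_sub_le {a b : R} (ha : 0 ≤ a) (hab : a ≤ b) {m n : ℕ} :
    ∑ j ∈ Icc m n, (n.choose j : R) * a ^ j * b ^ (n - j) ≤ 2 ^ n * (a ^ m * b ^ (n - m)) :=
  calc ∑ j ∈ Icc m n, (n.choose j : R) * a ^ j * b ^ (n - j)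
      ≤ ∑ j ∈ Icc m n, (n.choose j : R) * (a ^ m * b ^ (n - m)) := by
        refine sum_le_sum fun j hj => ?_
        rw [mul_assoc]
        gcongr 1
        exact pow_mul_pow_sub_le_pow_mul_pow_sub ha hab (mem_Icc.1 hj).1 (mem_Icc.1 hj).2
    _ ≤ ∑ j ∈ range (n + 1), (n.choose j : R) * (a ^ m * b ^ (n - m)) := by
        refine sum_le_sum_of_subset_of_nonneg (fun j hj => ?_) fun _ _ _ => ?_
        · simp only [mem_Icc, mem_range] at hj ⊢; omega
        · have hb : 0 ≤ b := ha.trans hab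
          positivity
    _ = 2 ^ n * (a ^ m * b ^ (n - m)) := by
        rw [← sum_mul, ← Nat.cast_sum, Nat.sum_range_choose, Nat.cast_pow, Nat.cast_ofNat]

end

theorem upper_half_binomial_ratio_tendsto_zero_general (c x : ℝ) (hc0 : 0 < c)
    (hx0 : 0 ≤ x) (hx : x < c / 2) :
    Tendsto (fun k : ℕ =>
        (∑ j ∈ Finset.Icc (k + 1) (2 * k + 1),
          ((2 * k + 1).choose j : ℝ) * x ^ j * (c - x) ^ (2 * k + 1 - j)) / c ^ (2 * k + 1))
      atTop (nhds 0) := by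
  have hxc : x ≤ c - x := by linarith
  have hcx : 0 ≤ c - x := hx0.trans hxc
  set r := 4 * x * (c - x) / c ^ 2
  have hr0 : 0 ≤ r := by positivity
  have hr1 : r < 1 := by
    rw [div_lt_one (by positivity)]
    nlinarith [sq_nonneg (c - 2 * x)]
  have hbound : Tendsto (fun k : ℕ => 2 * x / c * r ^ k) atTop (nhds 0) := by
    simpa using (tendsto_pow_atTop_nhds_zero_of_lt_one hr0 hr1).const_mul (2 * x / c)
  refine tendsto_of_tendsto_of_tendsto_of_le_of_le tendsto_const_nhds hbound
    (fun k => by positivity) fun k => ?_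
  calc _ ≤ 2 ^ (2 * k + 1) * (x ^ (k + 1) * (c - x) ^ (2 * k + 1 - (k + 1))) / c ^ (2 * k + 1) := by
        gcongr
        exact sum_Icc_choose_mul_pow_mul_pow_sub_le hx0 hxc
    _ = 2 * x / c * r ^ k := by
        have h2 : (2 : ℝ) ^ (2 * k + 1) = 2 * 4 ^ k := by rw [pow_succ, pow_mul]; norm_num; ring
        rw [show 2 * k + 1 - (k + 1) = k by omega, h2, pow_succ c, pow_mul]
        simp only [r, div_pow, mul_pow]
        field_simp
        ring

/-- Upper half binomial sum ratio tends to 0 over odd `N` (encoded `N = 2k+1`). -/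
theorem upper_half_binomial_ratio_tendsto_zero (c x : ℝ) (hc0 : 0 < c) (hc1 : c ≤ 1)
    (hx0 : 0 ≤ x) (hx : x < c / 2) :
    Tendsto (fun k : ℕ =>
        (∑ j ∈ Finset.Icc (k + 1) (2 * k + 1),
          ((2 * k + 1).choose j : ℝ) * x ^ j * (c - x) ^ (2 * k + 1 - j)) / c ^ (2 * k + 1))
      atTop (nhds 0) :=
  upper_half_binomial_ratio_tendsto_zero_general c x hc0 hx0 hx
end

section
/- For every odd natural number N and real x with 0 ≤ x < 1/2, the upper half binomial sum is strictly decreasing when N increases by 2: ∑_{j=⌈(N+2)/2⌉}^{N+2} C(N+2,j) x^j (1-x)^{N+2-j} < ∑_{j=⌈N/2⌉}^{N} C(N,j) x^j (1-x)^{N-j}, provided 0 < x < 1/2 (with equality of both sides to 0 when x = 0). -/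
/-!
Write `T n a` for the tail `P(Bin(n, x) ≥ a)`. Conditioning on the last trial gives
`T (n+1) (a+1) = T n (a+1) + x · P(Bin(n, x) = a)`. Applying this twice from `n = 2k+1` and
using `C(2k+2, k+1) = 2 C(2k+1, k+1)` yields
`T (2k+3) (k+2) = T (2k+1) (k+1) - (1 - 2x) C(2k+1, k+1) xᵏ⁺¹ (1-x)ᵏ⁺¹`,
and the correction is positive exactly when `0 < x < 1/2`.
-/

open Finset

lemma Finset.sum_Icc_succ_succ {M : Type*} [AddCommMonoid M] (f : ℕ → M) (a b : ℕ) :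
    ∑ j ∈ Icc (a + 1) (b + 1), f j = ∑ i ∈ Icc a b, f (i + 1) := by
  rw [← image_add_right_Icc a b 1, sum_image fun _ _ _ _ => Nat.add_right_cancel]

namespace Binomial

noncomputable def term (n j : ℕ) (x : ℝ) : ℝ :=
  (n.choose j : ℝ) * x ^ j * (1 - x) ^ (n - j)

noncomputable def tail (n a : ℕ) (x : ℝ) : ℝ :=
  ∑ j ∈ Icc a n, term n j x

variable (x : ℝ) {n a : ℕ}

lemma tail_eq_term_add (ha : a ≤ n) : tail n a x = term n a x + tail n (a + 1) x := by
  rw [tail, tail, ← insert_Icc_add_one_left_eq_Icc ha, sum_insert (by simp)]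

lemma tail_succ_succ_pascal (ha : a ≤ n) :
    tail (n + 1) (a + 1) x = (1 - x) * tail n (a + 1) x + x * tail n a x := by
  have pascal : ∀ i ∈ Icc a n, term (n + 1) (i + 1) x
      = (n.choose (i + 1) : ℝ) * x ^ (i + 1) * (1 - x) ^ (n + 1 - (i + 1)) + x * term n i x := by
    intro i _
    rw [term, term, Nat.choose_succ_succ, Nat.add_sub_add_right]
    push_cast
    ring
  have shifted :
      ∑ i ∈ Icc a n, (n.choose (i + 1) : ℝ) * x ^ (i + 1) * (1 - x) ^ (n + 1 - (i + 1))
        = (1 - x) * tail n (a + 1) x := by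
    rw [← sum_Icc_succ_succ (fun j => (n.choose j : ℝ) * x ^ j * (1 - x) ^ (n + 1 - j)),
      sum_Icc_succ_top (by omega), tail, mul_sum]
    simp only [Nat.choose_succ_self, Nat.cast_zero, zero_mul, add_zero]
    refine sum_congr rfl fun j hj => ?_
    rw [term, show n + 1 - j = n - j + 1 by grind, pow_succ]
    ring
  rw [tail, sum_Icc_succ_succ, sum_congr rfl pascal, sum_add_distrib, ← mul_sum, shifted]
  rfl

lemma tail_succ_succ (ha : a ≤ n) :
    tail (n + 1) (a + 1) x = tail n (a + 1) x + x * term n a x := by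
  rw [tail_succ_succ_pascal x ha, tail_eq_term_add x ha]
  ring

lemma tail_two_mul_add_three (k : ℕ) :
    tail (2 * k + 3) (k + 2) x = tail (2 * k + 1) (k + 1) x
      - (1 - 2 * x) * ((2 * k + 1).choose (k + 1) * x ^ (k + 1) * (1 - x) ^ (k + 1)) := by
  rw [tail_succ_succ x (by omega : k + 1 ≤ 2 * k + 2),
    tail_succ_succ x (by omega : k + 1 ≤ 2 * k + 1),
    tail_eq_term_add x (by omega : k + 1 ≤ 2 * k + 1)]
  have hmid : (2 * k + 2).choose (k + 1) = 2 * (2 * k + 1).choose (k + 1) := by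
    rw [Nat.choose_succ_succ, ← Nat.choose_symm_half]
    ring
  simp only [term, hmid, show 2 * k + 1 - (k + 1) = k by omega,
    show 2 * k + 2 - (k + 1) = k + 1 by omega]
  push_cast
  ring

end Binomial

/-- For odd `N` and `0 < x < 1/2`, the upper half binomial sum strictly decreases
when `N` increases by `2`. -/
theorem upper_half_binomial_strict_anti (N : ℕ) (hN : Odd N) (x : ℝ) (hx0 : 0 < x)
    (hx : x < 1 / 2) :
    ∑ j ∈ Finset.Icc ((N + 3) / 2) (N + 2),
        ((N + 2).choose j : ℝ) * x ^ j * (1 - x) ^ (N + 2 - j)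
      < ∑ j ∈ Finset.Icc ((N + 1) / 2) N, (N.choose j : ℝ) * x ^ j * (1 - x) ^ (N - j) := by
  obtain ⟨k, rfl⟩ := hN
  have hlhs : (2 * k + 1 + 3) / 2 = k + 2 := by omega
  have hrhs : (2 * k + 1 + 1) / 2 = k + 1 := by omega
  change Binomial.tail (2 * k + 1 + 2) ((2 * k + 1 + 3) / 2) x
    < Binomial.tail (2 * k + 1) ((2 * k + 1 + 1) / 2) x
  rw [hlhs, hrhs, show 2 * k + 1 + 2 = 2 * k + 3 by ring, Binomial.tail_two_mul_add_three]
  have hcorr :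
      0 < (1 - 2 * x) * ((2 * k + 1).choose (k + 1) * x ^ (k + 1) * (1 - x) ^ (k + 1)) := by
    have : 0 < 1 - x := by linarith
    have : 0 < ((2 * k + 1).choose (k + 1) : ℝ) := by exact_mod_cast Nat.choose_pos (by omega)
    have : 0 < 1 - 2 * x := by linarith
    positivity
  linarith
end

section
/- For every odd natural number N and real x with 0 < x < 1/2, the lower half binomial sum is strictly increasing when N increases by 2: ∑_{j=0}^{⌊(N+2)/2⌋} C(N+2,j) x^j (1-x)^{N+2-j} > ∑_{j=0}^{⌊N/2⌋} C(N,j) x^j (1-x)^{N-j}. -/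
open Finset

lemma step_sum (x : ℝ) (M k : ℕ) (hk : k ≤ M) :
    ∑ j ∈ Finset.range (k + 1), ((M + 1).choose j : ℝ) * x ^ j * (1 - x) ^ (M + 1 - j)
      = ∑ j ∈ Finset.range (k + 1), (M.choose j : ℝ) * x ^ j * (1 - x) ^ (M - j)
        - (M.choose k : ℝ) * x ^ (k + 1) * (1 - x) ^ (M - k) := by
  induction k with
  | zero =>
    rw [Finset.sum_range_one, Finset.sum_range_one]
    simp only [Nat.choose_zero_right, Nat.cast_one, pow_zero, Nat.sub_zero, pow_succ]
    ring
  | succ k ih =>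
    have hk' : k ≤ M := by omega
    have h1 : M + 1 - (k + 1) = M - k := by omega
    have h2 : M - k = (M - (k + 1)) + 1 := by omega
    rw [Finset.sum_range_succ, ih hk',
      Finset.sum_range_succ (fun j => (M.choose j : ℝ) * x ^ j * (1 - x) ^ (M - j)) (k + 1),
      h1, h2, Nat.choose_succ_succ]
    simp only [Nat.succ_eq_add_one]
    push_cast
    ring

/-- For odd `N` and `0 < x < 1/2`, the lower half binomial sum strictly increases
when `N` increases by `2`. -/
theorem lower_half_binomial_strict_mono (N : ℕ) (hN : Odd N) (x : ℝ) (hx0 : 0 < x)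
    (hx : x < 1 / 2) :
    ∑ j ∈ Finset.range ((N + 2) / 2 + 1),
        ((N + 2).choose j : ℝ) * x ^ j * (1 - x) ^ (N + 2 - j)
      > ∑ j ∈ Finset.range (N / 2 + 1), (N.choose j : ℝ) * x ^ j * (1 - x) ^ (N - j) := by
  obtain ⟨m, rfl⟩ := hN
  have e1 : (2 * m + 1 + 2) / 2 + 1 = m + 2 := by omega
  have e2 : (2 * m + 1) / 2 + 1 = m + 1 := by omega
  rw [e1, e2]
  have key1 := step_sum x (2 * m + 2) (m + 1) (by omega)
  have key2 := step_sum x (2 * m + 1) (m + 1) (by omega)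
  have hsplit : ∑ j ∈ Finset.range (m + 2),
      ((2 * m + 1).choose j : ℝ) * x ^ j * (1 - x) ^ (2 * m + 1 - j)
      = (∑ j ∈ Finset.range (m + 1),
          ((2 * m + 1).choose j : ℝ) * x ^ j * (1 - x) ^ (2 * m + 1 - j))
        + ((2 * m + 1).choose (m + 1) : ℝ) * x ^ (m + 1) * (1 - x) ^ (2 * m + 1 - (m + 1)) :=
    Finset.sum_range_succ _ _
  have h3 : (2 * m + 1 + 2) = (2 * m + 2) + 1 := by omega
  rw [h3, key1, key2, hsplit]
  have hc : ((2 * m + 2).choose (m + 1) : ℝ) = 2 * ((2 * m + 1).choose (m + 1) : ℝ) := by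
    have h5 : (2 * m + 2).choose (m + 1)
        = (2 * m + 1).choose m + (2 * m + 1).choose (m + 1) :=
      Nat.choose_succ_succ (2 * m + 1) m
    have hsym : (2 * m + 1).choose m = (2 * m + 1).choose (m + 1) := by
      rw [← Nat.choose_symm (show m + 1 ≤ 2 * m + 1 by omega),
        (show 2 * m + 1 - (m + 1) = m by omega)]
    rw [h5, hsym]; push_cast; ring
  have e4 : 2 * m + 1 - (m + 1) = m := by omega
  have e5 : 2 * m + 2 - (m + 1) = m + 1 := by omega
  rw [e4, e5, hc]
  have hx1 : (0:ℝ) < 1 - x := by linarith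
  have hc0 : (0:ℝ) < ((2 * m + 1).choose (m + 1) : ℝ) := by
    exact_mod_cast Nat.choose_pos (by omega)
  have key : ((2 * m + 1).choose (m + 1) : ℝ) * x ^ (m + 1) * (1 - x) ^ m
      * ((1 - x) * (1 - 2 * x)) > 0 := by
    have h6 : (0:ℝ) < (1 - x) * (1 - 2 * x) := by nlinarith
    have h7 : (0:ℝ) < ((2 * m + 1).choose (m + 1) : ℝ) * x ^ (m + 1) * (1 - x) ^ m := by
      positivity
    exact mul_pos h7 h6
  rw [show (1 - x) ^ (m + 1) = (1 - x) ^ m * (1 - x) from pow_succ _ _,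
    show x ^ (m + 1 + 1) = x ^ (m + 1) * x from pow_succ _ _]
  nlinarith [key]
end

section
/- Let x, y be nonnegative reals with x ≠ y and x + y ≤ 1. Then lim_{N→∞} ∑_{j=0}^{⌊N/2⌋} C(N,2j) C(2j,j) x^j y^j (1-x-y)^{N-2j} = 0. -/
/-!
Bound `C(2j, j) ≤ 4^j`, so that the `j`-th term is at most `C(N, 2j) a^(2j) q^(N-2j)` with
`a = 2√(xy)` and `q = 1 - x - y`. These are the even-index terms of the binomial expansion of
`(a + q)^N`, and by strict AM-GM `a + q < x + y + q = 1` when `x ≠ y`.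
-/

open Finset Filter

theorem sum_range_choose_two_mul_le_add_pow {R : Type*} [CommSemiring R] [PartialOrder R]
    [IsOrderedRing R] {a b : R} (ha : 0 ≤ a) (hb : 0 ≤ b) (N : ℕ) :
    ∑ j ∈ range (N / 2 + 1), (N.choose (2 * j) : R) * a ^ (2 * j) * b ^ (N - 2 * j) ≤
      (a + b) ^ N := by
  rw [add_pow]
  calc _ = ∑ k ∈ (range (N / 2 + 1)).image (2 * ·), a ^ k * b ^ (N - k) * N.choose k := by
        rw [sum_image fun u _ v _ h => by simpa using h]
        exact sum_congr rfl fun j _ => by ring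
    _ ≤ _ := sum_le_sum_of_subset_of_nonneg
        (fun k => by simp only [mem_image, mem_range]; omega) fun _ _ _ => by positivity

theorem centralBinom_mul_pow_mul_pow_le {x y : ℝ} (hx : 0 ≤ x) (hy : 0 ≤ y) (j : ℕ) :
    ((2 * j).choose j : ℝ) * x ^ j * y ^ j ≤ (2 * √(x * y)) ^ (2 * j) := by
  have h4 : ((2 * j).choose j : ℝ) ≤ 4 ^ j := by
    exact_mod_cast (Nat.centralBinom_eq_two_mul_choose j).symm.trans_le
      (Nat.centralBinom_le_four_pow j)
  calc _ ≤ (4 : ℝ) ^ j * x ^ j * y ^ j := by gcongr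
    _ = _ := by rw [pow_mul, mul_pow, Real.sq_sqrt (mul_nonneg hx hy)]; ring

theorem two_mul_sqrt_mul_lt_add {x y : ℝ} (hx : 0 ≤ x) (hy : 0 ≤ y) (hxy : x ≠ y) :
    2 * √(x * y) < x + y := by
  have hpos : 0 < x + y := by
    by_contra! h
    exact hxy (by linarith)
  rw [← lt_div_iff₀' two_pos, Real.sqrt_lt' (by positivity)]
  nlinarith [sq_pos_of_ne_zero (sub_ne_zero.mpr hxy)]

theorem sum_choose_centralBinom_mul_pow_le {x y q : ℝ} (hx : 0 ≤ x) (hy : 0 ≤ y) (hq : 0 ≤ q)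
    (N : ℕ) :
    ∑ j ∈ range (N / 2 + 1),
        (N.choose (2 * j) : ℝ) * ((2 * j).choose j : ℝ) * x ^ j * y ^ j * q ^ (N - 2 * j) ≤
      (2 * √(x * y) + q) ^ N := by
  refine (sum_le_sum fun j _ => ?_).trans
    (sum_range_choose_two_mul_le_add_pow (by positivity) hq N)
  calc _ = (N.choose (2 * j) : ℝ) * (((2 * j).choose j : ℝ) * x ^ j * y ^ j) *
        q ^ (N - 2 * j) := by ring
    _ ≤ _ := by gcongr; exact centralBinom_mul_pow_mul_pow_le hx hy j

/-- The tie probability vanishes: if `x ≠ y` are nonnegative with `x + y ≤ 1`, then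
`∑_{j=0}^{⌊N/2⌋} C(N,2j) C(2j,j) x^j y^j (1-x-y)^{N-2j} → 0` as `N → ∞`. -/
theorem tie_probability_tendsto_zero (x y : ℝ) (hx : 0 ≤ x) (hy : 0 ≤ y) (hxy : x ≠ y)
    (hsum : x + y ≤ 1) :
    Tendsto (fun N : ℕ =>
        ∑ j ∈ Finset.range (N / 2 + 1),
          (N.choose (2 * j) : ℝ) * ((2 * j).choose j : ℝ) * x ^ j * y ^ j *
            (1 - x - y) ^ (N - 2 * j))
      atTop (nhds 0) := by
  have hq : 0 ≤ 1 - x - y := by linarith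
  have hr : 2 * √(x * y) + (1 - x - y) < 1 := by
    linarith [two_mul_sqrt_mul_lt_add hx hy hxy]
  exact squeeze_zero (fun N => sum_nonneg fun j _ => by positivity)
    (sum_choose_centralBinom_mul_pow_le hx hy hq)
    (tendsto_pow_atTop_nhds_zero_of_lt_one (by positivity) hr)
end

section
/- Let p be a real number with 1/2 < p ≤ 1. Define P(N) = ∑_{j=⌊N/2⌋+1}^{N} C(N,j) p^j (1-p)^{N-j} for odd N. Then P is strictly increasing along odd N (P(N+2) > P(N) for p < 1) and lim_{N→∞, N odd} P(N) = 1. -/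
open Finset Filter

lemma pascal2 (n j : ℕ) : (n+2).choose (j+2) = n.choose j + 2 * n.choose (j+1) + n.choose (j+2) := by
  rw [show n+2 = (n+1)+1 from rfl, Nat.choose_succ_succ (n+1) (j+1),
    Nat.choose_succ_succ n j, Nat.choose_succ_succ n (j+1)]
  ring

lemma step (p : ℝ) (k : ℕ) :
    ∑ j ∈ Finset.Icc (k+2) (2*k+1+2), ((2*k+1+2).choose j : ℝ) * p^j * (1-p)^(2*k+1+2-j)
    = (∑ j ∈ Finset.Icc (k+1) (2*k+1), ((2*k+1).choose j : ℝ) * p^j * (1-p)^(2*k+1-j))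
      + ((2*k+1).choose k : ℝ) * p^(k+1) * (1-p)^(k+1) * (2*p - 1) := by
  set q := 1 - p with hq
  -- convert to range sums
  have hL : ∑ j ∈ Finset.Icc (k+2) (2*k+1+2), ((2*k+1+2).choose j : ℝ) * p^j * q^(2*k+1+2-j)
      = ∑ i ∈ range (k+2), ((2*k+3).choose (k+2+i) : ℝ) * p^(k+2+i) * q^(k+1-i) := by
    rw [← Finset.Ico_add_one_right_eq_Icc, Finset.sum_Ico_eq_sum_range]
    apply Finset.sum_congr (by congr 1 <;> omega)
    intro i hi
    simp only [mem_range] at hi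
    rw [show 2*k+1+2 = 2*k+3 from by ring, show 2*k+3-(k+2+i) = k+1-i from by omega]
  have hT : ∑ j ∈ Finset.Icc (k+1) (2*k+1), ((2*k+1).choose j : ℝ) * p^j * q^(2*k+1-j)
      = ∑ i ∈ range (k+1), ((2*k+1).choose (k+1+i) : ℝ) * p^(k+1+i) * q^(k-i) := by
    rw [← Finset.Ico_add_one_right_eq_Icc, Finset.sum_Ico_eq_sum_range]
    apply Finset.sum_congr (by congr 1 <;> omega)
    intro i hi
    simp only [mem_range] at hi
    rw [show 2*k+1-(k+1+i) = k-i from by omega]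
  rw [hL, hT]
  -- Pascal split
  have hsplit : ∀ i ∈ range (k+2),
      ((2*k+3).choose (k+2+i) : ℝ) * p^(k+2+i) * q^(k+1-i)
      = ((2*k+1).choose (k+i) : ℝ) * p^(k+2+i) * q^(k+1-i)
        + 2 * (((2*k+1).choose (k+1+i) : ℝ) * p^(k+2+i) * q^(k+1-i))
        + ((2*k+1).choose (k+2+i) : ℝ) * p^(k+2+i) * q^(k+1-i) := by
    intro i _
    have := pascal2 (2*k+1) (k+i)
    rw [show 2*k+1+2 = 2*k+3 from by ring, show k+i+2 = k+2+i from by ring,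
      show k+i+1 = k+1+i from by ring] at this
    rw [this]
    push_cast
    ring
  rw [Finset.sum_congr rfl hsplit, Finset.sum_add_distrib, Finset.sum_add_distrib]
  -- A part
  have hA : ∑ i ∈ range (k+2), ((2*k+1).choose (k+i) : ℝ) * p^(k+2+i) * q^(k+1-i)
      = p^2 * ∑ i ∈ range (k+1), ((2*k+1).choose (k+1+i) : ℝ) * p^(k+1+i) * q^(k-i)
        + ((2*k+1).choose k : ℝ) * p^(k+2) * q^(k+1) := by
    have hterm : ∀ i ∈ range (k+1),
        ((2*k+1).choose (k+(i+1)) : ℝ) * p^(k+2+(i+1)) * q^(k+1-(i+1))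
        = p^2 * (((2*k+1).choose (k+1+i) : ℝ) * p^(k+1+i) * q^(k-i)) := by
      intro i _
      rw [show k+(i+1) = k+1+i from by ring, show k+1-(i+1) = k-i from by omega,
        show k+2+(i+1) = (k+1+i)+2 from by ring]
      ring
    rw [Finset.sum_range_succ', Finset.sum_congr rfl hterm, Finset.mul_sum]
    norm_num
  -- B part
  have hB : ∑ i ∈ range (k+2), 2 * (((2*k+1).choose (k+1+i) : ℝ) * p^(k+2+i) * q^(k+1-i))
      = 2*p*q * ∑ i ∈ range (k+1), ((2*k+1).choose (k+1+i) : ℝ) * p^(k+1+i) * q^(k-i) := by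
    have h0 : ((2*k+1).choose (k+1+(k+1)) : ℝ) = 0 := by
      rw [Nat.choose_eq_zero_of_lt (by omega)]; norm_num
    have hterm : ∀ i ∈ range (k+1),
        2 * (((2*k+1).choose (k+1+i) : ℝ) * p^(k+2+i) * q^(k+1-i))
        = 2*p*q * (((2*k+1).choose (k+1+i) : ℝ) * p^(k+1+i) * q^(k-i)) := by
      intro i hi
      simp only [mem_range] at hi
      rw [show k+1-i = (k-i)+1 from by omega, show k+2+i = (k+1+i)+1 from by ring]
      ring
    rw [Finset.sum_range_succ, h0, Finset.sum_congr rfl hterm, Finset.mul_sum]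
    norm_num
  -- C part
  have hC : ∑ i ∈ range (k+2), ((2*k+1).choose (k+2+i) : ℝ) * p^(k+2+i) * q^(k+1-i)
      = q^2 * ∑ i ∈ range (k+1), ((2*k+1).choose (k+1+i) : ℝ) * p^(k+1+i) * q^(k-i)
        - ((2*k+1).choose (k+1) : ℝ) * p^(k+1) * q^(k+2) := by
    have h1 : ((2*k+1).choose (k+2+(k+1)) : ℝ) = 0 := by
      rw [Nat.choose_eq_zero_of_lt (by omega)]; norm_num
    have h2 : ((2*k+1).choose (k+2+k) : ℝ) = 0 := by
      rw [Nat.choose_eq_zero_of_lt (by omega)]; norm_num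
    have key : q^2 * ∑ i ∈ range (k+1), ((2*k+1).choose (k+1+i) : ℝ) * p^(k+1+i) * q^(k-i)
        = ∑ i ∈ range k, ((2*k+1).choose (k+2+i) : ℝ) * p^(k+2+i) * q^(k+1-i)
          + ((2*k+1).choose (k+1) : ℝ) * p^(k+1) * q^(k+2) := by
      have hterm : ∀ i ∈ range k,
          q^2 * (((2*k+1).choose (k+1+(i+1)) : ℝ) * p^(k+1+(i+1)) * q^(k-(i+1)))
          = ((2*k+1).choose (k+2+i) : ℝ) * p^(k+2+i) * q^(k+1-i) := by
        intro i hi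
        simp only [mem_range] at hi
        rw [show k+1+(i+1) = k+2+i from by ring, show k-(i+1) = k-1-i from by omega,
          show k+1-i = (k-1-i)+2 from by omega]
        ring
      rw [Finset.mul_sum, Finset.sum_range_succ', Finset.sum_congr rfl hterm]
      norm_num
      ring
    rw [Finset.sum_range_succ, Finset.sum_range_succ, h1, h2, key]
    ring
  rw [hA, hB, hC]
  have hsym : ((2*k+1).choose (k+1) : ℝ) = ((2*k+1).choose k : ℝ) := by
    norm_cast
    rw [show k+1 = 2*k+1-k from by omega]
    exact Nat.choose_symm (by omega)
  rw [hsym, hq]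
  ring

private theorem majority_tail (p : ℝ) (hp : 1 / 2 < p) (hp1 : p ≤ 1) :
    Tendsto (fun k : ℕ =>
        ∑ j ∈ Finset.Icc ((2 * k + 1) / 2 + 1) (2 * k + 1),
          ((2 * k + 1).choose j : ℝ) * p ^ j * (1 - p) ^ (2 * k + 1 - j))
      atTop (nhds 1) := by
  set q := 1 - p with hq
  have hq0 : 0 ≤ q := by rw [hq]; linarith
  have hp0 : 0 ≤ p := by linarith
  have hqp : q ≤ p := by rw [hq]; linarith
  -- lower-half sum
  set L : ℕ → ℝ := fun k => ∑ j ∈ range (k+1), ((2*k+1).choose j : ℝ) * p^j * q^(2*k+1-j) with hL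
  have htot : ∀ k : ℕ, L k + ∑ j ∈ Finset.Icc (k+1) (2*k+1),
      ((2*k+1).choose j : ℝ) * p^j * q^(2*k+1-j) = 1 := by
    intro k
    have h1 : (1:ℝ) = (p + q)^(2*k+1) := by rw [hq]; norm_num
    rw [h1, add_pow]
    rw [← Finset.Ico_add_one_right_eq_Icc, ← Nat.Ico_zero_eq_range,
      ← Finset.sum_Ico_consecutive _ (by omega : 0 ≤ k+1) (by omega : k+1 ≤ 2*k+1+1)]
    congr 1
    · rw [Nat.Ico_zero_eq_range]; apply Finset.sum_congr rfl; intro j _; ring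
    · apply Finset.sum_congr rfl; intro j _; ring
  -- bound on L
  have hLnn : ∀ k : ℕ, 0 ≤ L k := by
    intro k
    apply Finset.sum_nonneg
    intro j _
    positivity
  have hLb : ∀ k : ℕ, L k ≤ q * (4*p*q)^k := by
    intro k
    have step1 : L k ≤ ∑ j ∈ range (k+1), ((2*k+1).choose j : ℝ) * (p^k * q^(k+1)) := by
      apply Finset.sum_le_sum
      intro j hj
      simp only [mem_range] at hj
      have hjk : j ≤ k := by omega
      have e : 2*k+1-j = (k+1)+(k-j) := by omega
      rw [e, pow_add, mul_assoc]
      apply mul_le_mul_of_nonneg_left _ (by positivity)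
      calc p^j * (q^(k+1) * q^(k-j)) ≤ p^j * (q^(k+1) * p^(k-j)) := by
            apply mul_le_mul_of_nonneg_left _ (by positivity)
            exact mul_le_mul_of_nonneg_left (pow_le_pow_left₀ hq0 hqp _) (by positivity)
        _ = p^k * q^(k+1) := by
            rw [show p^j * (q^(k+1) * p^(k-j)) = (p^j * p^(k-j)) * q^(k+1) from by ring,
              ← pow_add, show j+(k-j) = k from by omega]
    refine step1.trans ?_
    rw [← Finset.sum_mul]
    have hcount : ∑ j ∈ range (k+1), ((2*k+1).choose j : ℝ) = 4^k := by
      rw [← Nat.cast_sum]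
      rw [Nat.sum_range_choose_halfway k]
      norm_num
    rw [hcount]
    have : (4:ℝ)^k * (p^k * q^(k+1)) = q * (4*p*q)^k := by
      rw [mul_pow, mul_pow, pow_succ]
      ring
    rw [this]
  -- the bound tends to 0
  have hb0 : Tendsto (fun k : ℕ => q * (4*p*q)^k) atTop (nhds 0) := by
    have hr0 : 0 ≤ 4*p*q := by positivity
    have hr1 : 4*p*q < 1 := by
      have h1 : 0 < 2*p - 1 := by linarith
      nlinarith [mul_pos h1 h1]
    have := tendsto_pow_atTop_nhds_zero_of_lt_one hr0 hr1
    simpa using this.const_mul q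
  have hLz : Tendsto L atTop (nhds 0) :=
    squeeze_zero hLnn hLb hb0
  have hmain : Tendsto (fun k : ℕ => ∑ j ∈ Finset.Icc (k+1) (2*k+1),
      ((2*k+1).choose j : ℝ) * p^j * q^(2*k+1-j)) atTop (nhds 1) := by
    have : (fun k : ℕ => ∑ j ∈ Finset.Icc (k+1) (2*k+1),
        ((2*k+1).choose j : ℝ) * p^j * q^(2*k+1-j)) = fun k => 1 - L k := by
      funext k
      have := htot k
      linarith
    rw [this]
    have := (tendsto_const_nhds (x := (1:ℝ)) (f := atTop)).sub hLz
    simpa using this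
  have heq : ∀ k : ℕ, (2*k+1)/2 + 1 = k+1 := fun k => by omega
  simp only [heq]
  exact hmain
/-- For `1/2 < p ≤ 1`, the majority-rule probability
`P(N) = ∑_{j=⌊N/2⌋+1}^N C(N,j) p^j (1-p)^{N-j}` is strictly increasing along odd `N`
(when `p < 1`) and tends to 1 over odd `N`. -/
theorem majority_prob_mono_and_tendsto_one (p : ℝ) (hp : 1 / 2 < p) (hp1 : p ≤ 1) :
    (∀ N : ℕ, Odd N → p < 1 →
      ∑ j ∈ Finset.Icc ((N + 2) / 2 + 1) (N + 2),
          ((N + 2).choose j : ℝ) * p ^ j * (1 - p) ^ (N + 2 - j)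
        > ∑ j ∈ Finset.Icc (N / 2 + 1) N, (N.choose j : ℝ) * p ^ j * (1 - p) ^ (N - j)) ∧
    Tendsto (fun k : ℕ =>
        ∑ j ∈ Finset.Icc ((2 * k + 1) / 2 + 1) (2 * k + 1),
          ((2 * k + 1).choose j : ℝ) * p ^ j * (1 - p) ^ (2 * k + 1 - j))
      atTop (nhds 1) := by
  constructor
  · intro N hN hplt
    obtain ⟨k, rfl⟩ := hN
    have e1 : (2*k+1+2)/2 + 1 = k + 2 := by omega
    have e2 : (2*k+1)/2 + 1 = k + 1 := by omega
    rw [e1, e2, step p k]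
    have hc : (0:ℝ) < ((2*k+1).choose k : ℝ) := by
      exact_mod_cast Nat.choose_pos (by omega)
    have hpp : (0:ℝ) < p := by linarith
    have hqq : (0:ℝ) < 1 - p := by linarith
    have h2p : (0:ℝ) < 2*p - 1 := by linarith
    have : 0 < ((2*k+1).choose k : ℝ) * p^(k+1) * (1-p)^(k+1) * (2*p - 1) := by positivity
    linarith
  · exact majority_tail p hp hp1
end

section
/- Let x, y ≥ 0 with y < x and x + y ≤ 1. Then lim_{h→∞} (∑_{j=⌊h/2⌋+1}^{h} C(h,j) y^j x^{h-j}) / (x+y)^h = 0, and consequently there exists ε̄ > 0 such that for all h ≥ 1, ∑_{j=⌊h/2⌋+1}^{h} C(h,j) y^j x^{h-j} < (x + y - ε̄)^h. -/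
open Finset Filter

/-- If `0 ≤ y < x` and `x + y ≤ 1`, the minority-tail sum is exponentially small
relative to `(x+y)^h`: its ratio tends to 0, and it is bounded by `(x+y-ε)^h`
for some `ε > 0` and all `h ≥ 1`. -/
theorem minority_tail_small (x y : ℝ) (hx : 0 ≤ x) (hy : 0 ≤ y) (hyx : y < x)
    (hsum : x + y ≤ 1) :
    Tendsto (fun h : ℕ =>
        (∑ j ∈ Finset.Icc (h / 2 + 1) h, (h.choose j : ℝ) * y ^ j * x ^ (h - j)) /
          (x + y) ^ h) atTop (nhds 0) ∧
    ∃ ε > (0 : ℝ), ∀ h : ℕ, 1 ≤ h →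
      ∑ j ∈ Finset.Icc (h / 2 + 1) h, (h.choose j : ℝ) * y ^ j * x ^ (h - j)
        < (x + y - ε) ^ h := by
  set s : ℝ := Real.sqrt (x * y) with hs
  have hs0 : 0 ≤ s := Real.sqrt_nonneg _
  have hxy0 : 0 ≤ x * y := mul_nonneg hx hy
  have hs2 : s ^ 2 = x * y := Real.sq_sqrt hxy0
  have hxpos : 0 < x := lt_of_le_of_lt hy hyx
  have hxy : 0 < x + y := by linarith
  -- key: 2*s < x + y  (strict AM-GM)
  have hr : 2 * s < x + y := by
    rw [← pow_lt_pow_iff_left₀ (by positivity) hxy.le (two_ne_zero)]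
    have : (2 * s) ^ 2 = 4 * (x * y) := by rw [mul_pow, hs2]; ring
    rw [this]
    nlinarith [sq_nonneg (x - y)]
  -- key bound: sum ≤ (2*s)^h
  have key : ∀ h : ℕ,
      (∑ j ∈ Finset.Icc (h / 2 + 1) h, (h.choose j : ℝ) * y ^ j * x ^ (h - j))
        ≤ (2 * s) ^ h := by
    intro h
    have term : ∀ j ∈ Finset.Icc (h / 2 + 1) h, y ^ j * x ^ (h - j) ≤ s ^ h := by
      intro j hj
      rw [Finset.mem_Icc] at hj
      have hjh : j ≤ h := hj.2
      have h2j : h < 2 * j := by omega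
      rw [← pow_le_pow_iff_left₀ (by positivity) (by positivity) (two_ne_zero)]
      have e1 : (y ^ j * x ^ (h - j)) ^ 2 = y ^ (2 * j) * x ^ (2 * (h - j)) := by
        rw [mul_pow, ← pow_mul, ← pow_mul, mul_comm j 2, mul_comm (h - j) 2]
      have e2 : (s ^ h) ^ 2 = y ^ h * x ^ h := by
        rw [← pow_mul, mul_comm h 2, pow_mul, hs2, mul_pow, mul_comm]
      rw [e1, e2]
      set m := 2 * j - h with hm
      calc y ^ (2 * j) * x ^ (2 * (h - j))
          = y ^ h * x ^ (2 * (h - j)) * y ^ m := by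
            rw [show 2 * j = h + m by omega, pow_add]; ring
        _ ≤ y ^ h * x ^ (2 * (h - j)) * x ^ m := by
            exact mul_le_mul_of_nonneg_left (pow_le_pow_left₀ hy hyx.le m)
              (by positivity)
        _ = y ^ h * (x ^ (2 * (h - j)) * x ^ m) := by ring
        _ = y ^ h * x ^ h := by rw [← pow_add, show 2 * (h - j) + m = h by omega]
    calc (∑ j ∈ Finset.Icc (h / 2 + 1) h, (h.choose j : ℝ) * y ^ j * x ^ (h - j))
        ≤ ∑ j ∈ Finset.Icc (h / 2 + 1) h, (h.choose j : ℝ) * s ^ h := by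
          apply Finset.sum_le_sum
          intro j hj
          rw [mul_assoc]
          exact mul_le_mul_of_nonneg_left (term j hj) (by positivity)
      _ = (∑ j ∈ Finset.Icc (h / 2 + 1) h, (h.choose j : ℝ)) * s ^ h := by
          rw [← Finset.sum_mul]
      _ ≤ (2 : ℝ) ^ h * s ^ h := by
          apply mul_le_mul_of_nonneg_right _ (by positivity)
          have hsub : Finset.Icc (h / 2 + 1) h ⊆ Finset.range (h + 1) := by
            intro j hj
            rw [Finset.mem_Icc] at hj
            rw [Finset.mem_range]
            omega
          calc (∑ j ∈ Finset.Icc (h / 2 + 1) h, (h.choose j : ℝ))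
              ≤ ∑ j ∈ Finset.range (h + 1), (h.choose j : ℝ) :=
                Finset.sum_le_sum_of_subset_of_nonneg hsub
                  (fun j _ _ => by positivity)
            _ = (2 : ℝ) ^ h := by
                rw [← Nat.cast_sum, Nat.sum_range_choose]
                push_cast
                ring
      _ = (2 * s) ^ h := by rw [mul_pow]
  have snn : ∀ h : ℕ, 0 ≤
      (∑ j ∈ Finset.Icc (h / 2 + 1) h, (h.choose j : ℝ) * y ^ j * x ^ (h - j)) := by
    intro h
    apply Finset.sum_nonneg
    intro j _
    positivity
  constructor
  · -- ratio tends to 0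
    have hq0 : 0 ≤ 2 * s / (x + y) := by positivity
    have hq1 : 2 * s / (x + y) < 1 := (div_lt_one hxy).2 hr
    have hlim : Tendsto (fun h : ℕ => (2 * s / (x + y)) ^ h) atTop (nhds 0) :=
      tendsto_pow_atTop_nhds_zero_of_lt_one hq0 hq1
    refine tendsto_of_tendsto_of_tendsto_of_le_of_le tendsto_const_nhds hlim
      (fun h => by positivity) (fun h => ?_)
    rw [div_pow]
    exact div_le_div_of_nonneg_right (key h) (by positivity) |>.trans_eq rfl
  · refine ⟨(x + y - 2 * s) / 2, by linarith, fun h hh => ?_⟩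
    have h1 : 2 * s < x + y - (x + y - 2 * s) / 2 := by linarith
    calc (∑ j ∈ Finset.Icc (h / 2 + 1) h, (h.choose j : ℝ) * y ^ j * x ^ (h - j))
        ≤ (2 * s) ^ h := key h
      _ < (x + y - (x + y - 2 * s) / 2) ^ h := by
          exact pow_lt_pow_left₀ h1 (by positivity) (by omega)
end

section
/- Consider N independent identical sequential decision makers each of which, given hypothesis H1, decides for H1 at time t with probability p1(t) and for H0 at time t with probability p0(t), with all decisions at the earliest decision time t̄ (the minimal t with p1(t) + p0(t) > 0). Under the fastest rule (threshold q = 1), if p1(t̄) > p0(t̄), then the probability of wrong group decision tends to 0 as N → ∞ over odd N. -/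
open Finset Filter

lemma term_le_sqrt (x y : ℝ) (hx : 0 ≤ x) (hxy : x ≤ y) {h j : ℕ}
    (h1 : h ≤ 2 * j) (h2 : j ≤ h) :
    x ^ j * y ^ (h - j) ≤ Real.sqrt (x * y) ^ h := by
  have hy : 0 ≤ y := hx.trans hxy
  have hA : 0 ≤ x ^ j * y ^ (h - j) := by positivity
  refine (pow_le_pow_iff_left₀ hA (by positivity) (two_ne_zero)).mp ?_
  have hsq : (Real.sqrt (x * y) ^ h) ^ 2 = x ^ h * y ^ h := by
    rw [← pow_mul, mul_comm h 2, pow_mul, Real.sq_sqrt (by positivity), mul_pow]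
  rw [hsq, mul_pow, ← pow_mul, ← pow_mul]
  obtain ⟨d, hd1, hd2⟩ : ∃ d, j * 2 = h + d ∧ (h - j) * 2 + d = h :=
    ⟨2 * j - h, by omega, by omega⟩
  rw [hd1, pow_add]
  calc x ^ h * x ^ d * y ^ ((h - j) * 2)
      ≤ x ^ h * y ^ d * y ^ ((h - j) * 2) := by
        gcongr
    _ = x ^ h * y ^ ((h - j) * 2 + d) := by rw [pow_add]; ring
    _ = x ^ h * y ^ h := by rw [hd2]

lemma inner_sum_le (x y : ℝ) (hx : 0 ≤ x) (hxy : x ≤ y) (h : ℕ) :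
    ∑ j ∈ Finset.Icc (h / 2 + 1) h, (h.choose j : ℝ) * x ^ j * y ^ (h - j)
      ≤ (2 * Real.sqrt (x * y)) ^ h := by
  have hy : 0 ≤ y := hx.trans hxy
  calc ∑ j ∈ Finset.Icc (h / 2 + 1) h, (h.choose j : ℝ) * x ^ j * y ^ (h - j)
      ≤ ∑ j ∈ Finset.Icc (h / 2 + 1) h, (h.choose j : ℝ) * Real.sqrt (x * y) ^ h := by
        refine Finset.sum_le_sum fun j hj => ?_
        simp only [Finset.mem_Icc] at hj
        rw [mul_assoc]
        exact mul_le_mul_of_nonneg_left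
          (term_le_sqrt x y hx hxy (by omega) hj.2) (by positivity)
    _ = (∑ j ∈ Finset.Icc (h / 2 + 1) h, (h.choose j : ℝ)) * Real.sqrt (x * y) ^ h := by
        rw [Finset.sum_mul]
    _ ≤ (∑ j ∈ Finset.range (h + 1), (h.choose j : ℝ)) * Real.sqrt (x * y) ^ h := by
        refine mul_le_mul_of_nonneg_right ?_ (by positivity)
        refine Finset.sum_le_sum_of_subset_of_nonneg ?_ (fun i _ _ => by positivity)
        intro i hi
        simp only [Finset.mem_Icc] at hi
        simp only [Finset.mem_range]
        omega
    _ = (2 : ℝ) ^ h * Real.sqrt (x * y) ^ h := by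
        norm_cast
        rw [Nat.sum_range_choose]
    _ = (2 * Real.sqrt (x * y)) ^ h := (mul_pow _ _ _).symm

/-- Fastest rule accuracy: with `x = p₀(t̄) < y = p₁(t̄)`, `x + y ≤ 1`, the probability
of wrong group decision at the earliest decision time tends to 0 over odd `N = 2k+1`. -/
theorem fastest_rule_error_tendsto_zero (x y : ℝ) (hx : 0 ≤ x) (hxy : x < y)
    (hsum : x + y ≤ 1) :
    Tendsto (fun k : ℕ =>
        ∑ h ∈ Finset.Icc 1 (2 * k + 1),
          (((2 * k + 1).choose h : ℝ)) *
            (∑ j ∈ Finset.Icc (h / 2 + 1) h, (h.choose j : ℝ) * x ^ j * y ^ (h - j)) *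
            (1 - x - y) ^ (2 * k + 1 - h))
      atTop (nhds 0) := by
  have hy : 0 ≤ y := hx.trans hxy.le
  have ht : 0 ≤ 1 - x - y := by linarith
  set r : ℝ := 2 * Real.sqrt (x * y) + (1 - x - y) with hr
  have hr0 : 0 ≤ r := by positivity
  have hr1 : r < 1 := by
    have ha : Real.sqrt x < Real.sqrt y := Real.sqrt_lt_sqrt hx hxy
    have hax : Real.sqrt x ^ 2 = x := Real.sq_sqrt hx
    have hay : Real.sqrt y ^ 2 = y := Real.sq_sqrt hy
    have hmul : Real.sqrt (x * y) = Real.sqrt x * Real.sqrt y := Real.sqrt_mul hx y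
    have h0 : 0 ≤ Real.sqrt x := Real.sqrt_nonneg x
    nlinarith [sq_nonneg (Real.sqrt y - Real.sqrt x)]
  refine squeeze_zero (g := fun k => r ^ (2 * k + 1)) ?_ ?_ ?_
  · intro k
    refine Finset.sum_nonneg fun h _ => ?_
    refine mul_nonneg (mul_nonneg (by positivity) ?_) (by positivity)
    exact Finset.sum_nonneg fun j _ => by positivity
  · intro k
    calc ∑ h ∈ Finset.Icc 1 (2 * k + 1),
          (((2 * k + 1).choose h : ℝ)) *
            (∑ j ∈ Finset.Icc (h / 2 + 1) h, (h.choose j : ℝ) * x ^ j * y ^ (h - j)) *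
            (1 - x - y) ^ (2 * k + 1 - h)
        ≤ ∑ h ∈ Finset.Icc 1 (2 * k + 1),
            (((2 * k + 1).choose h : ℝ)) * (2 * Real.sqrt (x * y)) ^ h *
              (1 - x - y) ^ (2 * k + 1 - h) := by
          refine Finset.sum_le_sum fun h _ => ?_
          refine mul_le_mul_of_nonneg_right ?_ (by positivity)
          exact mul_le_mul_of_nonneg_left (inner_sum_le x y hx hxy.le h) (by positivity)
      _ ≤ ∑ h ∈ Finset.range (2 * k + 1 + 1),
            (((2 * k + 1).choose h : ℝ)) * (2 * Real.sqrt (x * y)) ^ h *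
              (1 - x - y) ^ (2 * k + 1 - h) := by
          refine Finset.sum_le_sum_of_subset_of_nonneg ?_ (fun i _ _ => by positivity)
          intro i hi
          simp only [Finset.mem_Icc] at hi
          simp only [Finset.mem_range]
          omega
      _ = r ^ (2 * k + 1) := by
          rw [hr, add_pow]
          refine Finset.sum_congr rfl fun h _ => by ring
  · have hg : Tendsto (fun k : ℕ => 2 * k + 1) atTop atTop :=
      tendsto_atTop_mono (fun k => by simp only [id]; omega) tendsto_id
    exact (tendsto_pow_atTop_nhds_zero_of_lt_one hr0 hr1).comp hg
end

section
/- Consider a group of N sequential decision makers with individual decision probabilities p_{i|j}(t), run with the q-out-of-N aggregation rule, where for each hypothesis j there is a time t_j with p_{0|j}(t_j) > 0 and p_{1|j}(t_j) > 0. The group almost surely reaches a decision (for both hypotheses) if and only if: (i) each individual almost surely reaches a decision, (ii) N is odd, and (iii) 1 ≤ q ≤ ⌈N/2⌉. -/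
/-!
If every voter decides, then once the last of them has voted the two counts add up to the odd
number `N`, so they differ and the larger one is at least `(N + 1) / 2 ≥ q`.

Conversely, by independence and the positivity at time `tj j`, every profile in which all voters
vote simultaneously at `tj j` (and only voters with a positive probability of never deciding stay
silent) has positive probability, so the fusion rule must fire on it. For `N` even the tie
`N/2 : N/2` does not fire, for `q > (N + 1) / 2` the split `(N + 1) / 2 : N - (N + 1) / 2` does not
fire, and a silent voter together with a tie `(N - 1)/2 : (N - 1)/2` does not fire either.
-/

open MeasureTheory ProbabilityTheory Finset

/-- Discrete σ-algebra on the outcome space of a single sequential decision maker: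
`some (t, i)` means "decide for hypothesis `i` at time `t`", `none` means "never decide". -/
noncomputable instance : MeasurableSpace (Option (ℕ × Bool)) := ⊤

open Classical in
/-- Number of decision makers having decided for hypothesis `i` up to time `t`. -/
noncomputable def countVotes {N : ℕ} (d : Fin N → Option (ℕ × Bool)) (i : Bool) (t : ℕ) : ℕ :=
  (Finset.univ.filter fun k => ∃ s ≤ t, d k = some (s, i)).card

/-- The `q` out of `N` fusion rule reaches a decision: at some time `t`, one hypothesis
has strictly more votes than the other and at least `q` votes. -/
def groupDecides {N : ℕ} (q : ℕ) (d : Fin N → Option (ℕ × Bool)) : Prop :=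
  ∃ t : ℕ,
    (countVotes d false t < countVotes d true t ∧ q ≤ countVotes d true t) ∨
    (countVotes d true t < countVotes d false t ∧ q ≤ countVotes d false t)


lemma ProbabilityTheory.iIndepFun.of_ae_of_measure_ne_zero {ι Ω α : Type*} [Fintype ι]
    [MeasurableSpace Ω] {μ : Measure Ω} [MeasurableSpace α] [MeasurableSingletonClass α]
    {X : ι → Ω → α} (hX : iIndepFun X μ) {R : (ι → α) → Prop}
    (hR : ∀ᵐ ω ∂μ, R (fun i => X i ω)) (v : ι → α) (hv : ∀ i, μ {ω | X i ω = v i} ≠ 0) :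
    R v := by
  have hpos : μ (⋂ i, {ω | X i ω = v i}) ≠ 0 := by
    rw [hX.meas_iInter (s := fun i => {ω | X i ω = v i})
      fun i => ⟨{v i}, measurableSet_singleton _, rfl⟩]
    exact prod_ne_zero_iff.2 fun i _ => hv i
  by_contra hRv
  refine hpos (measure_mono_null (fun ω hω => ?_) (ae_iff.1 hR))
  have : (fun i => X i ω) = v := funext (Set.mem_iInter.1 hω)
  simpa [this] using hRv

def FusionDecides (q a b : ℕ) : Prop :=
  (b < a ∧ q ≤ a) ∨ (a < b ∧ q ≤ b)

lemma groupDecides_iff {N q : ℕ} (d : Fin N → Option (ℕ × Bool)) :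
    groupDecides q d ↔ ∃ t, FusionDecides q (countVotes d true t) (countVotes d false t) :=
  Iff.rfl

lemma Fintype.exists_option_bool_card_eq {ι : Type*} [Fintype ι] [DecidableEq ι]
    (S : Finset ι) {a b : ℕ} (h : a + b + #S = Fintype.card ι) :
    ∃ f : ι → Option Bool, (∀ k, f k = none → k ∈ S) ∧
      #{k | f k = some true} = a ∧ #{k | f k = some false} = b := by
  obtain ⟨A, hAS, hA⟩ := exists_subset_card_eq (s := Sᶜ) (n := a) (by rw [card_compl]; omega)
  refine ⟨fun k => if k ∈ S then none else some (decide (k ∈ A)), fun k => ?_, ?_, ?_⟩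
  · by_cases hk : k ∈ S <;> simp [hk]
  · convert hA
    ext k
    have := @hAS k
    by_cases hk : k ∈ S <;> simp_all
  · have : #(Sᶜ \ A) = b := by rw [card_sdiff_of_subset hAS, card_compl]; omega
    convert this
    ext k
    by_cases hk : k ∈ S <;> simp [hk]

lemma countVotes_map_const {N : ℕ} (f : Fin N → Option Bool) (t₀ t : ℕ) (i : Bool) :
    countVotes (fun k => (f k).map (t₀, ·)) i t = if t₀ ≤ t then #{k | f k = some i} else 0 := by
  unfold countVotes
  split_ifs with ht
  · congr 1
    ext k
    cases f k <;> simp [ht]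
  · simp only [card_eq_zero, filter_eq_empty_iff]
    intro k _
    cases f k <;> simp [ht]

lemma groupDecides_map_const_iff {N q : ℕ} (f : Fin N → Option Bool) (t₀ : ℕ) :
    groupDecides q (fun k => (f k).map (t₀, ·)) ↔
      FusionDecides q #{k | f k = some true} #{k | f k = some false} := by
  simp only [groupDecides_iff, countVotes_map_const]
  refine ⟨fun ⟨t, ht⟩ => ?_, fun h => ⟨t₀, by simpa using h⟩⟩
  split_ifs at ht
  · exact ht
  · simp [FusionDecides] at ht

lemma countVotes_true_add_false {N : ℕ} {d : Fin N → Option (ℕ × Bool)} {t : ℕ}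
    (hd : ∀ k, ∃ s ≤ t, ∃ i, d k = some (s, i)) :
    countVotes d true t + countVotes d false t = N := by
  classical
  have hfalse : ∀ k, (∃ s ≤ t, d k = some (s, false)) ↔ ¬ ∃ s ≤ t, d k = some (s, true) := by
    intro k
    obtain ⟨s, hs, i, hk⟩ := hd k
    cases i <;> simp [hk, hs]
  unfold countVotes
  rw [filter_congr fun k _ => hfalse k, card_filter_add_card_filter_not, card_univ,
    Fintype.card_fin]

lemma groupDecides_of_forall_ne_none {N q : ℕ} {d : Fin N → Option (ℕ × Bool)}
    (hN : Odd N) (hq : q ≤ (N + 1) / 2) (hd : ∀ k, d k ≠ none) : groupDecides q d := by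
  let time k := ((d k).map Prod.fst).getD 0
  have hdecided : ∀ k, ∃ s ≤ univ.sup time, ∃ i, d k = some (s, i) := by
    intro k
    obtain ⟨⟨s, i⟩, hk⟩ := Option.ne_none_iff_exists'.1 (hd k)
    exact ⟨s, by simpa [time, hk] using le_sup (f := time) (mem_univ k), i, hk⟩
  have hsum := countVotes_true_add_false hdecided
  rw [Nat.odd_iff] at hN
  refine ⟨univ.sup time, ?_⟩
  omega

lemma fusionDecides_of_ae_groupDecides {N q : ℕ} {Ω : Type*} [MeasurableSpace Ω]
    {μ : Measure Ω} {D : Fin N → Ω → Option (ℕ × Bool)} (hD : iIndepFun D μ)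
    (hdec : ∀ᵐ ω ∂μ, groupDecides q (fun k => D k ω)) {t₀ : ℕ}
    (hsome : ∀ k b, μ {ω | D k ω = some (t₀, b)} ≠ 0) (S : Finset (Fin N))
    (hS : ∀ k ∈ S, μ {ω | D k ω = none} ≠ 0) (a b : ℕ) (hab : a + b + #S = N) :
    FusionDecides q a b := by
  obtain ⟨f, hfS, rfl, rfl⟩ :=
    Fintype.exists_option_bool_card_eq S (hab.trans (Fintype.card_fin N).symm)
  rw [← groupDecides_map_const_iff f t₀]
  refine hD.of_ae_of_measure_ne_zero hdec _ fun k => ?_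
  cases hk : f k with
  | none => exact hS k (hfS k hk)
  | some b => exact hsome k b

theorem group_almost_sure_decision_iff_general
    (N q : ℕ) (hq1 : 1 ≤ q)
    (Ω : Bool → Type) [∀ j, MeasurableSpace (Ω j)]
    (P : ∀ j, Measure (Ω j)) [∀ j, IsProbabilityMeasure (P j)]
    (D : ∀ j : Bool, Fin N → Ω j → Option (ℕ × Bool))
    (p : Bool → Bool → ℕ → ℝ)
    (hmeas : ∀ j k, Measurable (D j k))
    (hmarg : ∀ j k t i, (P j) {ω | D j k ω = some (t, i)} = ENNReal.ofReal (p i j t))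
    (hindep : ∀ j, iIndepFun (m := fun _ : Fin N => (inferInstance :
        MeasurableSpace (Option (ℕ × Bool)))) (D j) (P j))
    (tj : Bool → ℕ)
    (hpos : ∀ j, 0 < p false j (tj j) ∧ 0 < p true j (tj j)) :
    (∀ j, (P j) {ω | groupDecides q (fun k => D j k ω)} = 1)
      ↔ ((∀ j k, (P j) {ω | D j k ω ≠ none} = 1) ∧ Odd N ∧ 1 ≤ q ∧ q ≤ (N + 1) / 2) := by
  have hgroup_meas (j) : Measurable fun ω => groupDecides q (fun k => D j k ω) :=
    (Measurable.of_discrete (f := groupDecides q)).comp (measurable_pi_lambda _ (hmeas j))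
  have hind_meas (j k) : Measurable fun ω => D j k ω ≠ none :=
    (Measurable.of_discrete (f := (· ≠ none))).comp (hmeas j k)
  simp only [← ae_iff_prob_eq_one (hgroup_meas _), ← ae_iff_prob_eq_one (hind_meas _ _),
    Nat.odd_iff]
  constructor
  · intro hdec
    have hsome (j k b) : P j {ω | D j k ω = some (tj j, b)} ≠ 0 := by
      rw [hmarg, ne_eq, ENNReal.ofReal_eq_zero, not_le]
      cases b
      exacts [(hpos j).1, (hpos j).2]
    have hfires := fun j => fusionDecides_of_ae_groupDecides (hindep j) (hdec j) (hsome j)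
    have hodd : N % 2 = 1 := by
      by_contra hev
      have := hfires true ∅ (by simp) (N / 2) (N / 2) (by rw [card_empty]; omega)
      simp [FusionDecides] at this
    have hq : q ≤ (N + 1) / 2 := by
      by_contra hq
      have := hfires true ∅ (by simp) ((N + 1) / 2) (N - (N + 1) / 2)
        (by rw [card_empty]; omega)
      simp only [FusionDecides] at this
      omega
    refine ⟨fun j k => ?_, hodd, hq1, hq⟩
    by_contra hk
    have := hfires j {k} (by simpa [ae_iff] using hk) (N / 2) (N / 2) (by rw [card_singleton]; omega)
    simp [FusionDecides] at this
  · rintro ⟨hind, hodd, -, hq⟩ j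
    filter_upwards [ae_all_iff.2 (hind j)] with ω hω
    exact groupDecides_of_forall_ne_none (Nat.odd_iff.2 hodd) hq hω

/-- The `q` out of `N` SDA group (of `N` i.i.d. decision makers with individual decision
probabilities `p i j t = P[decide H_i at time t | H_j]`, where under each hypothesis `j`
there is a time `tj j` at which both individual decision probabilities are positive)
has the almost-sure decision property under both hypotheses iff each individual has the
almost-sure decision property, `N` is odd, and `1 ≤ q ≤ ⌈N/2⌉`. -/
theorem group_almost_sure_decision_iff
    (N q : ℕ) (hN : 0 < N) (hq1 : 1 ≤ q) (hqN : q ≤ N)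
    (Ω : Bool → Type) [∀ j, MeasurableSpace (Ω j)]
    (P : ∀ j, Measure (Ω j)) [∀ j, IsProbabilityMeasure (P j)]
    (D : ∀ j : Bool, Fin N → Ω j → Option (ℕ × Bool))
    (p : Bool → Bool → ℕ → ℝ)
    (hmeas : ∀ j k, Measurable (D j k))
    (hmarg : ∀ j k t i, (P j) {ω | D j k ω = some (t, i)} = ENNReal.ofReal (p i j t))
    (hindep : ∀ j, iIndepFun (m := fun _ : Fin N => (inferInstance :
        MeasurableSpace (Option (ℕ × Bool)))) (D j) (P j))
    (tj : Bool → ℕ)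
    (hpos : ∀ j, 0 < p false j (tj j) ∧ 0 < p true j (tj j)) :
    (∀ j, (P j) {ω | groupDecides q (fun k => D j k ω)} = 1)
      ↔ ((∀ j k, (P j) {ω | D j k ω ≠ none} = 1) ∧ Odd N ∧ 1 ≤ q ∧ q ≤ (N + 1) / 2) :=
  group_almost_sure_decision_iff_general N q hq1 Ω P D p hmeas hmarg hindep tj hpos
end
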